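/- Sum-rate gap between power splitting and time switching: define g(x) = log(1 + λx) − λ·log(1 + x) for fixed λ ∈ (0,1). Then g(0) = 0, g is nonnegative on [0, ∞), g is strictly positive on (0, ∞), and g(x)/log(1+x) → (1 − λ) as x → ∞; i.e., at high SNR the power-splitting rate approaches the full (ideal-receiver) rate minus the constant (1/2)·log(1/λ) while the time-switching rate is only a λ fraction of it. -/

import Mathlib

/-!
Positivity of the gap is Bernoulli's inequality `(1 + x) ^ λ < 1 + λ x` for `0 < λ < 1`, read
through `log`. For the limit, `log (1 + λ x) - log (1 + x) = log ((1 + λ x) / (1 + x)) → log λ`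
stays bounded while `log (1 + x) → ∞`, so `log (1 + λ x) / log (1 + x) → 1` and the normalized
gap tends to `1 - λ`.
-/

open Filter Real Topology

lemma mul_log_one_add_lt_log_one_add_mul {l x : ℝ} (hx : -1 < x) (hx0 : x ≠ 0)
    (hl0 : 0 < l) (hl1 : l < 1) : l * log (1 + x) < log (1 + l * x) := by
  have h1x : 0 < 1 + x := by linarith
  rw [← log_rpow h1x]
  exact log_lt_log (rpow_pos_of_pos h1x l) (rpow_one_add_lt_one_add_mul_self hx.le hx0 hl0 hl1)

lemma tendsto_one_add_mul_div_one_add_atTop (l : ℝ) :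
    Tendsto (fun x : ℝ => (1 + l * x) / (1 + x)) atTop (𝓝 l) := by
  have hdecay : Tendsto (fun x : ℝ => (1 - l) / (1 + x)) atTop (𝓝 0) :=
    tendsto_const_nhds.div_atTop (tendsto_atTop_add_const_left atTop 1 tendsto_id)
  have hsplit : (fun x : ℝ => l + (1 - l) / (1 + x)) =ᶠ[atTop] fun x => (1 + l * x) / (1 + x) := by
    filter_upwards [eventually_gt_atTop (-1 : ℝ)] with x hx
    have : 1 + x ≠ 0 := by linarith
    field_simp
    ring
  simpa using (tendsto_const_nhds.add hdecay).congr' hsplit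

lemma tendsto_log_one_add_mul_sub_log_one_add_atTop {l : ℝ} (hl : l ≠ 0) :
    Tendsto (fun x : ℝ => log (1 + l * x) - log (1 + x)) atTop (𝓝 (log l)) := by
  have hratio := tendsto_one_add_mul_div_one_add_atTop l
  refine ((continuousAt_log hl).tendsto.comp hratio).congr' ?_
  filter_upwards [hratio.eventually_ne hl, eventually_gt_atTop (-1 : ℝ)] with x hne hx
  exact log_div (div_ne_zero_iff.mp hne).1 (by linarith)

lemma tendsto_log_one_add_mul_div_log_one_add_atTop {l : ℝ} (hl : l ≠ 0) :
    Tendsto (fun x : ℝ => log (1 + l * x) / log (1 + x)) atTop (𝓝 1) := by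
  have hden : Tendsto (fun x : ℝ => log (1 + x)) atTop atTop :=
    tendsto_log_atTop.comp (tendsto_atTop_add_const_left atTop 1 tendsto_id)
  have hsplit : (fun x : ℝ => 1 + (log (1 + l * x) - log (1 + x)) / log (1 + x))
      =ᶠ[atTop] fun x => log (1 + l * x) / log (1 + x) := by
    filter_upwards [hden.eventually_gt_atTop 0] with x hx
    field_simp
    ring
  simpa using (tendsto_const_nhds.add
    ((tendsto_log_one_add_mul_sub_log_one_add_atTop hl).div_atTop hden)).congr' hsplit

/-- The sum-rate gap `g(x) = log(1+λx) − λ·log(1+x)` for a fixed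
`λ ∈ (0,1)` vanishes at `0`, is nonnegative on `[0,∞)`, strictly positive on
`(0,∞)`, and satisfies `g(x)/log(1+x) → 1 − λ` as `x → ∞`. -/
theorem power_split_time_switch_gap
    (l : ℝ) (hl0 : 0 < l) (hl1 : l < 1) :
    (Real.log (1 + l * 0) - l * Real.log (1 + 0) = 0) ∧
    (∀ x : ℝ, 0 ≤ x → 0 ≤ Real.log (1 + l * x) - l * Real.log (1 + x)) ∧
    (∀ x : ℝ, 0 < x → 0 < Real.log (1 + l * x) - l * Real.log (1 + x)) ∧
    Tendsto (fun x : ℝ =>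
        (Real.log (1 + l * x) - l * Real.log (1 + x)) / Real.log (1 + x))
      atTop (nhds (1 - l)) := by
  have gap_pos : ∀ x : ℝ, 0 < x → 0 < log (1 + l * x) - l * log (1 + x) := fun x hx =>
    sub_pos.2 (mul_log_one_add_lt_log_one_add_mul (by linarith) hx.ne' hl0 hl1)
  refine ⟨by simp, fun x hx => ?_, gap_pos, ?_⟩
  · rcases hx.eq_or_lt with rfl | hx
    · simp
    · exact (gap_pos x hx).le
  · refine ((tendsto_log_one_add_mul_div_log_one_add_atTop hl0.ne').sub_const l).congr' ?_
    filter_upwards [eventually_gt_atTop (0 : ℝ)] with x hx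
    have : log (1 + x) ≠ 0 := (log_pos (by linarith)).ne'
    field_simp
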